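/- arXiv:0804.1489 — 4 statements merged into one kernel-verified Lean document; each statement's English description precedes it below -/
import Mathlib

section
/- Let Γ be a finite group and π = ℤ × ℤ (the fundamental group of the torus). Then the number of group homomorphisms from π to Γ equals |Γ| times the number of equivalence classes of irreducible complex representations of Γ. Equivalently, the number of pairs (a,b) ∈ Γ × Γ with ab = ba equals |Γ| times the number of conjugacy classes of Γ. -/
/-- An irreducible complex linear representation of a group `Γ`,
given by a positive dimension `n` and a homomorphism `Γ → GL_n(ℂ)`
(encoded as a `Representation` on `ℂ^n` by invertible maps) such that the only
invariant subspaces are `0` and the whole space. -/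
structure IrrRep (Γ : Type) [Group Γ] where
  n : ℕ
  npos : 0 < n
  ρ : Representation ℂ Γ (Fin n → ℂ)
  invertible : ∀ g : Γ, Function.Bijective (ρ g)
  irr : ∀ p : Submodule ℂ (Fin n → ℂ), (∀ g : Γ, ∀ x ∈ p, ρ g x ∈ p) → p = ⊥ ∨ p = ⊤

variable {Γ : Type} [Group Γ]

/-- Equivalence of representations: an intertwining linear isomorphism. -/
def IrrRep.equiv (A B : IrrRep Γ) : Prop :=
  ∃ e : (Fin A.n → ℂ) ≃ₗ[ℂ] (Fin B.n → ℂ), ∀ g v, e (A.ρ g v) = B.ρ g (e v)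

instance IrrRep.setoid (Γ : Type) [Group Γ] : Setoid (IrrRep Γ) where
  r := IrrRep.equiv
  iseqv := by
    constructor
    · intro A; exact ⟨LinearEquiv.refl ℂ _, fun g v => rfl⟩
    · rintro A B ⟨e, he⟩
      refine ⟨e.symm, fun g v => ?_⟩
      rw [LinearEquiv.symm_apply_eq, he, e.apply_symm_apply]
    · rintro A B C ⟨e, he⟩ ⟨f, hf⟩
      exact ⟨e.trans f, fun g v => by
        simp only [LinearEquiv.trans_apply, he, hf]⟩

/-- The set of equivalence classes of irreducible representations of `Γ`. -/
def IrrClass (Γ : Type) [Group Γ] := Quotient (IrrRep.setoid Γ)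

/-- The dimension of an equivalence class of irreducible representations. -/
def IrrClass.dim : IrrClass Γ → ℕ :=
  Quotient.lift (fun A => A.n) (by
    rintro A B ⟨e, -⟩
    have h := e.finrank_eq
    simpa using h)

/-! Homomorphisms `ℤ × ℤ → Γ` are the commuting pairs, and a commuting pair is an element together
with an element of its centraliser; summing `|C(a)| = |Γ| / |aᴳ|` over `Γ` gives
`|Γ| · #(conjugacy classes)`. It remains to see that there are as many irreducible representations
as conjugacy classes. The irreducible characters are orthonormal class functions, hence linearly
independent; they are also complete: if a class function `f` is orthogonal to all of them, the
central element `∑ f(g) g` of `ℂ[Γ]` acts on each irreducible module by a scalar (Schur) of trace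
zero, so it annihilates every simple submodule of the semisimple algebra `ℂ[Γ]`, hence `ℂ[Γ]`
itself, and `f = 0`. -/

universe u

open scoped MonoidAlgebra
open Module

namespace Representation

section Irreducible

variable {k G V W : Type*} [Field k] [Group G] [AddCommGroup V] [Module k V]
  [AddCommGroup W] [Module k W] {ρ : Representation k G V} {σ : Representation k G W}

theorem isIrreducible_iff :
    ρ.IsIrreducible ↔
      Nontrivial V ∧ ∀ p : Submodule k V, (∀ g, ∀ v ∈ p, ρ g v ∈ p) → p = ⊥ ∨ p = ⊤ := by
  constructor
  · intro hρ
    refine ⟨IsSimpleModule.nontrivial k[G] ρ.asModule, fun p hp => ?_⟩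
    rcases eq_bot_or_eq_top (⟨p, hp⟩ : Subrepresentation ρ) with h | h
    · exact .inl congr(($h).toSubmodule)
    · exact .inr congr(($h).toSubmodule)
  · rintro ⟨hV, hirr⟩
    exact
      { exists_pair_ne := ⟨⊥, ⊤, fun h => bot_ne_top congr(($h).toSubmodule)⟩
        eq_bot_or_eq_top := fun S =>
          (hirr S.toSubmodule S.apply_mem_toSubmodule).imp Subrepresentation.ext
            Subrepresentation.ext }

theorem Equiv.isIrreducible (φ : ρ.Equiv σ) [ρ.IsIrreducible] : σ.IsIrreducible := by
  obtain ⟨hV, hirr⟩ := isIrreducible_iff.1 ‹ρ.IsIrreducible›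
  refine isIrreducible_iff.2 ⟨φ.toLinearEquiv.toEquiv.symm.nontrivial, fun p hp => ?_⟩
  let e := φ.toLinearEquiv
  have hq : ∀ g, ∀ v ∈ p.comap (e : V →ₗ[k] W), ρ g v ∈ p.comap (e : V →ₗ[k] W) := by
    intro g v hv
    simpa [e, φ.toIntertwiningMap.isIntertwining] using hp g _ hv
  simpa [Submodule.comap_equiv_eq_map_symm] using hirr _ hq

theorem IsIrreducible.exists_eq_smul_id [FiniteDimensional k V] [IsAlgClosed k] [ρ.IsIrreducible]
    (T : Module.End k V) (hT : ∀ g, T ∘ₗ ρ g = ρ g ∘ₗ T) : ∃ c : k, T = c • LinearMap.id := by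
  obtain ⟨c, hc⟩ := IsIrreducible.algebraMap_intertwiningMap_bijective_of_isAlgClosed.2
    (⟨T, hT⟩ : IntertwiningMap ρ ρ)
  exact ⟨c, congr(($hc).toLinearMap).symm⟩

end Irreducible

section ClassFunction

variable {k G V : Type*} [Field k] [Group G] [Fintype G] [AddCommGroup V] [Module k V]
  {f : G → k}

theorem sum_smul_comp_eq_comp_sum_smul (ρ : Representation k G V)
    (hf : ∀ g h, f (h * g * h⁻¹) = f g) (x : G) :
    (∑ g, f g • ρ g) ∘ₗ ρ x = ρ x ∘ₗ ∑ g, f g • ρ g := by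
  change (∑ g, f g • ρ g) * ρ x = ρ x * ∑ g, f g • ρ g
  rw [Finset.sum_mul, Finset.mul_sum]
  refine Fintype.sum_equiv (MulAut.conj x⁻¹).toEquiv _ _ fun g => ?_
  have hconj := hf g x⁻¹
  rw [inv_inv] at hconj
  simp [← map_mul, ← mul_assoc, hconj]

theorem sum_smul_eq_zero_of_sum_mul_character_eq_zero [FiniteDimensional k V] [IsAlgClosed k]
    [CharZero k] (ρ : Representation k G V) [ρ.IsIrreducible]
    (hf : ∀ g h, f (h * g * h⁻¹) = f g) (horth : ∑ g, f g * ρ.character g = 0) :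
    ∑ g, f g • ρ g = 0 := by
  obtain ⟨c, hc⟩ := IsIrreducible.exists_eq_smul_id _ (sum_smul_comp_eq_comp_sum_smul ρ hf)
  have : Nontrivial V := (isIrreducible_iff.1 ‹_›).1
  have htrace : LinearMap.trace k V (∑ g, f g • ρ g) = ∑ g, f g * ρ.character g := by
    simp [map_sum, character]
  rw [horth, hc] at htrace
  have hc0 : c = 0 := by simpa [finrank_pos.ne'] using htrace
  simp [hc, hc0]

end ClassFunction

section OfModule

variable {k G : Type*} [Field k] [Group G] (M : Type*) [AddCommGroup M] [Module k M]
  [Module k[G] M] [IsScalarTower k k[G] M]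

theorem asAlgebraHom_ofModule'_apply (r : k[G]) (m : M) :
    (ofModule' (k := k) (G := G) M).asAlgebraHom r m = r • m := by
  simp [asAlgebraHom_def, ofModule']

theorem isIrreducible_ofModule' [IsSimpleModule k[G] M] :
    (ofModule' (k := k) (G := G) M).IsIrreducible := by
  rw [irreducible_iff_isSimpleModule_asModule]
  exact IsSimpleModule.congr { AddEquiv.refl M with map_smul' := asAlgebraHom_ofModule'_apply M }

end OfModule

end Representation

theorem IsSemisimpleModule.mem_annihilator_of_forall_isSimpleModule {R M : Type*} [Ring R]
    [AddCommGroup M] [Module R M] [IsSemisimpleModule R M] {r : R}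
    (h : ∀ m : Submodule R M, IsSimpleModule R m → r ∈ m.annihilator) :
    r ∈ Module.annihilator R M := by
  rw [← Submodule.annihilator_top, ← sSup_simples_eq_top R M, sSup_eq_iSup',
    Submodule.annihilator_iSup, Submodule.mem_iInf]
  exact fun m => h m m.2

section Completeness

variable {k G : Type u} [Field k] [IsAlgClosed k] [CharZero k] [Group G] [Fintype G] {f : G → k}

theorem IsSimpleModule.sum_smul_of_smul_eq_zero (M : Type u) [AddCommGroup M] [Module k M]
    [Module k[G] M] [IsScalarTower k k[G] M] [IsSimpleModule k[G] M]
    (hf : ∀ g h, f (h * g * h⁻¹) = f g)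
    (horth : ∀ (V : Type u) [AddCommGroup V] [Module k V] [FiniteDimensional k V]
      (ρ : Representation k G V), ρ.IsIrreducible → ∑ g, f g * ρ.character g = 0) (m : M) :
    (∑ g, f g • MonoidAlgebra.of k G g) • m = 0 := by
  have hirr := Representation.isIrreducible_ofModule' (k := k) (G := G) M
  have : FiniteDimensional k M := Module.Finite.trans k[G] M
  have hsum := Representation.sum_smul_eq_zero_of_sum_mul_character_eq_zero _ hf (horth M _ hirr)
  rw [← Representation.asAlgebraHom_ofModule'_apply]
  simp [map_sum, hsum]

theorem Representation.eq_zero_of_forall_sum_mul_character_eq_zero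
    (hf : ∀ g h, f (h * g * h⁻¹) = f g)
    (horth : ∀ (V : Type u) [AddCommGroup V] [Module k V] [FiniteDimensional k V]
      (ρ : Representation k G V), ρ.IsIrreducible → ∑ g, f g * ρ.character g = 0) :
    f = 0 := by
  set z := ∑ g, f g • MonoidAlgebra.of k G g
  have hz : z ∈ Module.annihilator k[G] k[G] :=
    IsSemisimpleModule.mem_annihilator_of_forall_isSimpleModule fun m _ =>
      Submodule.mem_annihilator.2 fun x hx =>
        congrArg Subtype.val (IsSimpleModule.sum_smul_of_smul_eq_zero m hf horth ⟨x, hx⟩)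
  have hz0 : z = 0 := by simpa using Module.mem_annihilator.1 hz 1
  funext g
  exact Fintype.linearIndependent_iff.1 (MonoidAlgebra.basis G k).linearIndependent f
    (by simpa [z] using hz0) g

end Completeness

namespace IrrRep

instance (A : IrrRep Γ) : A.ρ.IsIrreducible :=
  have : Nonempty (Fin A.n) := ⟨⟨0, A.npos⟩⟩
  Representation.isIrreducible_iff.2 ⟨inferInstance, A.irr⟩

theorem equiv_iff_nonempty_equiv {A B : IrrRep Γ} : A.equiv B ↔ Nonempty (A.ρ.Equiv B.ρ) :=
  ⟨fun ⟨e, he⟩ => ⟨.mk e fun g => LinearMap.ext (he g)⟩,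
    fun ⟨φ⟩ => ⟨φ.toLinearEquiv, φ.toIntertwiningMap.isIntertwining⟩⟩

noncomputable def character (A : IrrRep Γ) : ConjClasses Γ → ℂ :=
  Quotient.lift A.ρ.character fun _ _ hgh => by
    obtain ⟨c, rfl⟩ := isConj_iff.1 hgh
    exact (A.ρ.char_conj _ c).symm

end IrrRep

theorem Representation.exists_irrRep_equiv {V : Type} [AddCommGroup V] [Module ℂ V]
    [FiniteDimensional ℂ V] (ρ : Representation ℂ Γ V) [ρ.IsIrreducible] :
    ∃ A : IrrRep Γ, Nonempty (ρ.Equiv A.ρ) := by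
  let e := (Module.finBasis ℂ V).equivFun
  let σ : Representation ℂ Γ (Fin (finrank ℂ V) → ℂ) :=
    (e.conjAlgEquiv ℂ).toAlgHom.toMonoidHom.comp ρ
  let φ : ρ.Equiv σ := .mk e fun g => by ext v; simp [σ]
  have : Nontrivial V := (isIrreducible_iff.1 ‹_›).1
  have := φ.isIrreducible
  exact ⟨⟨finrank ℂ V, finrank_pos, σ,
    fun g => (Module.End.isUnit_iff _).1 ((Group.isUnit g).map σ),
    (isIrreducible_iff.1 this).2⟩, ⟨φ⟩⟩

namespace IrrClass

noncomputable def character : IrrClass Γ → ConjClasses Γ → ℂ :=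
  Quotient.lift IrrRep.character fun _ _ hAB => by
    obtain ⟨φ⟩ := IrrRep.equiv_iff_nonempty_equiv.1 hAB
    funext c
    obtain ⟨g, rfl⟩ := ConjClasses.mk_surjective c
    exact congrFun (Representation.char_iso φ) g

@[simp]
theorem character_mk (A : IrrRep Γ) (g : Γ) :
    character ⟦A⟧ (ConjClasses.mk g) = A.ρ.character g :=
  rfl

variable [Fintype Γ]

open scoped Classical in
theorem sum_character_mul_character_inv (i j : IrrClass Γ) :
    ∑ g, i.character (.mk g) * j.character (.mk g⁻¹) =
      if i = j then (Nat.card Γ : ℂ) else 0 := by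
  induction i using Quotient.inductionOn with | h A => ?_
  induction j using Quotient.inductionOn with | h B => ?_
  have : Invertible (Nat.card Γ : ℂ) := invertibleOfNonzero (by simp)
  have horth := Representation.char_orthonormal A.ρ B.ρ
  rw [inv_mul_eq_iff_eq_mul₀ (by simp)] at horth
  have hAB : (⟦A⟧ : IrrClass Γ) = ⟦B⟧ ↔ Nonempty (B.ρ.Equiv A.ρ) := by
    rw [eq_comm, Quotient.eq]
    exact IrrRep.equiv_iff_nonempty_equiv
  simp only [character_mk, horth, mul_ite, mul_one, mul_zero]
  exact if_congr hAB.symm rfl rfl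

theorem linearIndependent_character [Fintype (IrrClass Γ)] :
    LinearIndependent ℂ (character (Γ := Γ)) := by
  classical
  refine Fintype.linearIndependent_iff.2 fun a ha j => ?_
  have hg : ∀ g : Γ, ∑ i, a i * i.character (.mk g) = 0 := fun g => by
    simpa using congrFun ha (.mk g)
  have hsum : a j * Nat.card Γ = 0 :=
    calc a j * Nat.card Γ
        = ∑ i, a i * ∑ g, i.character (.mk g) * j.character (.mk g⁻¹) := by
          simp [sum_character_mul_character_inv]
      _ = ∑ g, (∑ i, a i * i.character (.mk g)) * j.character (.mk g⁻¹) := by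
          simp only [Finset.mul_sum, Finset.sum_mul, mul_assoc]
          exact Finset.sum_comm
      _ = 0 := by simp [hg]
  simpa using hsum

theorem eq_zero_of_forall_sum_mul_character_eq_zero {u : ConjClasses Γ → ℂ}
    (horth : ∀ i : IrrClass Γ, ∑ g, u (.mk g) * i.character (.mk g) = 0) : u = 0 := by
  have hclass : ∀ g h : Γ, u (.mk (h * g * h⁻¹)) = u (.mk g) := fun g h =>
    congrArg u (ConjClasses.mk_eq_mk_iff_isConj.2 (isConj_iff.2 ⟨h, rfl⟩).symm)
  have hu := Representation.eq_zero_of_forall_sum_mul_character_eq_zero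
    (f := fun g => u (.mk g)) hclass fun V _ _ _ ρ _ => by
      obtain ⟨A, ⟨φ⟩⟩ := ρ.exists_irrRep_equiv
      simpa [Representation.char_iso φ] using horth ⟦A⟧
  funext c
  obtain ⟨g, rfl⟩ := ConjClasses.mk_surjective c
  exact congrFun hu g

theorem card_eq_card_conjClasses [Fintype (IrrClass Γ)] :
    Fintype.card (IrrClass Γ) = Nat.card (ConjClasses Γ) := by
  classical
  rw [Nat.card_eq_fintype_card]
  let pairing : (ConjClasses Γ → ℂ) →ₗ[ℂ] (IrrClass Γ → ℂ) :=
    LinearMap.pi fun i => ∑ g, i.character (.mk g) • LinearMap.proj (.mk g)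
  have hpairing : Function.Injective pairing := by
    refine (injective_iff_map_eq_zero _).2 fun u hu =>
      eq_zero_of_forall_sum_mul_character_eq_zero fun i => ?_
    simpa [pairing, mul_comm] using congrFun hu i
  apply le_antisymm
  · simpa using (linearIndependent_character (Γ := Γ)).fintype_card_le_finrank
  · simpa using LinearMap.finrank_le_finrank_of_injective hpairing

end IrrClass

def monoidHomMultiplicativeIntProdEquiv (G : Type*) [Group G] :
    (Multiplicative (ℤ × ℤ) →* G) ≃ {p : G × G // p.1 * p.2 = p.2 * p.1} where
  toFun φ := ⟨(φ (.ofAdd (1, 0)), φ (.ofAdd (0, 1))), by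
    simp only [← map_mul, ← ofAdd_add, add_comm]⟩
  invFun p :=
    { toFun := fun x => p.1.1 ^ x.toAdd.1 * p.1.2 ^ x.toAdd.2
      map_one' := by simp
      map_mul' := fun x y => by
        simp only [toAdd_mul, Prod.fst_add, Prod.snd_add, zpow_add]
        exact (Commute.zpow_zpow p.2 _ _).mul_mul_mul_comm _ _ }
  left_inv φ := MonoidHom.ext fun x => by
    simp only [MonoidHom.coe_mk, OneHom.coe_mk, ← map_zpow, ← map_mul, ← ofAdd_zsmul, ← ofAdd_add]
    congr 1
    ext <;> simp
  right_inv p := by ext <;> simp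

/-- Frobenius' formula: the number of group homomorphisms from `ℤ × ℤ` (the fundamental
group of the torus) to a finite group `Γ` equals `|Γ|` times the number of equivalence
classes of irreducible complex representations of `Γ`; equivalently, the number of
commuting pairs in `Γ` equals `|Γ|` times the number of conjugacy classes of `Γ`. -/
theorem frobenius_torus (Γ : Type) [Group Γ] [Fintype Γ] [Fintype (IrrClass Γ)] :
    Nat.card (Multiplicative (ℤ × ℤ) →* Γ) = Nat.card Γ * Fintype.card (IrrClass Γ) ∧
    Nat.card {p : Γ × Γ // p.1 * p.2 = p.2 * p.1} = Nat.card Γ * Nat.card (ConjClasses Γ) := by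
  have hpairs : Nat.card {p : Γ × Γ // p.1 * p.2 = p.2 * p.1} =
      Nat.card Γ * Nat.card (ConjClasses Γ) :=
    (card_comm_eq_card_conjClasses_mul_card Γ).trans (mul_comm _ _)
  refine ⟨?_, hpairs⟩
  rw [Nat.card_congr (monoidHomMultiplicativeIntProdEquiv Γ), hpairs,
    IrrClass.card_eq_card_conjClasses]
end

section
/- Let q : G' → G be a group epimorphism with kernel Γ. The number of one-dimensional representations ρ : Γ → ℂ* (Γ finite) whose stabilizer G_ρ equals G is |Γ / [Γ, G']|. -/
/-- Conjugation of an element of the kernel of `q : G' → G` by `a : G'`: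
`h ↦ a⁻¹ h a`, which stays in the kernel since the kernel is normal. -/
def conjKer {G' G : Type} [Group G'] [Group G] (q : G' →* G) (a : G') (h : q.ker) :
    q.ker :=
  ⟨a⁻¹ * (h : G') * a, by
    have hh : q (h : G') = 1 := h.2
    simp [MonoidHom.mem_ker, map_mul, map_inv, hh]⟩

/-! A character `ρ` of `Γ = ker q` is invariant under conjugation by `G'` exactly when it kills
every `h⁻¹ (a⁻¹ h a) = ⁅h⁻¹, a⁻¹⁆`, i.e. when it factors through `Γ / [Γ, G']`. That quotient is
abelian since `[Γ, Γ] ≤ [Γ, G']`, and a finite abelian group has as many `ℂˣ`-valued characters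
as elements. -/

open scoped commutatorElement

theorem Subgroup.commutator_le_subgroupOf_commutator_top {G : Type*} [Group G] (H : Subgroup G) :
    _root_.commutator H ≤ ⁅H, (⊤ : Subgroup G)⁆.subgroupOf H := by
  rw [← Subgroup.map_le_map_iff_of_injective H.subtype_injective, Subgroup.map_subtype_commutator,
    Subgroup.subgroupOf_map_subtype]
  exact le_inf (Subgroup.commutator_mono le_rfl le_top) H.commutator_le_self

open scoped IsMulCommutative in
theorem card_monoidHom_units_of_isSepClosed (A K : Type*) [Group A] [IsMulCommutative A]
    [Finite A] [Field K] [IsSepClosed K] [CharZero K] :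
    Nat.card (A →* Kˣ) = Nat.card A := by
  have : NeZero (Monoid.exponent A : K) := ⟨by exact_mod_cast Monoid.exponent_ne_zero_of_finite⟩
  exact CommGroup.card_monoidHom_of_hasEnoughRootsOfUnity A K

def QuotientGroup.liftMonoidHomEquiv {G M : Type*} [Group G] [Monoid M] (N : Subgroup G)
    [N.Normal] : {φ : G →* M // N ≤ φ.ker} ≃ (G ⧸ N →* M) where
  toFun φ := QuotientGroup.lift N φ.1 φ.2
  invFun ψ := ⟨ψ.comp (QuotientGroup.mk' N), fun x hx => by
    simp [(QuotientGroup.eq_one_iff x).mpr hx]⟩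
  left_inv _ := rfl
  right_inv ψ := QuotientGroup.monoidHom_ext N (MonoidHom.ext fun _ => rfl)

section ConjKer

variable {G' G : Type} [Group G'] [Group G] (q : G' →* G)

theorem coe_inv_mul_conjKer (a : G') (h : q.ker) :
    ((h⁻¹ * conjKer q a h : q.ker) : G') = ⁅(h : G')⁻¹, a⁻¹⁆ := by
  simp [conjKer, commutatorElement_def, mul_assoc]

theorem map_conjKer_eq_iff_le_ker {M : Type*} [Group M] (ρ : q.ker →* M) :
    (∀ a h, ρ (conjKer q a h) = ρ h) ↔ ⁅q.ker, (⊤ : Subgroup G')⁆.subgroupOf q.ker ≤ ρ.ker := by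
  constructor
  · intro hρ
    rw [← Subgroup.map_le_map_iff_of_injective q.ker.subtype_injective,
      Subgroup.subgroupOf_map_subtype]
    refine inf_le_of_left_le (Subgroup.commutator_le.mpr fun g hg a _ => ?_)
    refine ⟨(⟨g, hg⟩ : q.ker)⁻¹⁻¹ * conjKer q a⁻¹ ⟨g, hg⟩⁻¹, ?_, ?_⟩
    · simp [MonoidHom.mem_ker, hρ]
    · exact (coe_inv_mul_conjKer q a⁻¹ _).trans (by simp)
  · intro hle a h
    have hmem : h⁻¹ * conjKer q a h ∈ ⁅q.ker, (⊤ : Subgroup G')⁆.subgroupOf q.ker := by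
      rw [Subgroup.mem_subgroupOf, coe_inv_mul_conjKer]
      exact Subgroup.commutator_mem_commutator (inv_mem h.2) (Subgroup.mem_top _)
    have hker := hle hmem
    rw [MonoidHom.mem_ker, map_mul, map_inv, inv_mul_eq_one] at hker
    exact hker.symm

end ConjKer

theorem card_stable_characters_general {G' G : Type} [Group G'] [Group G]
    (q : G' →* G) [Finite q.ker] :
    Nat.card {ρ : q.ker →* ℂˣ // ∀ (a : G') (h : q.ker), ρ (conjKer q a h) = ρ h} =
      Nat.card (q.ker ⧸ (⁅q.ker, (⊤ : Subgroup G')⁆.subgroupOf q.ker)) := by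
  have : IsMulCommutative (q.ker ⧸ ⁅q.ker, (⊤ : Subgroup G')⁆.subgroupOf q.ker) :=
    Subgroup.Normal.quotient_commutative_iff_commutator_le.mpr
      (Subgroup.commutator_le_subgroupOf_commutator_top q.ker)
  calc _ = Nat.card {ρ : q.ker →* ℂˣ // ⁅q.ker, (⊤ : Subgroup G')⁆.subgroupOf q.ker ≤ ρ.ker} :=
        Nat.card_congr (Equiv.subtypeEquivRight (map_conjKer_eq_iff_le_ker q))
    _ = _ := Nat.card_congr (QuotientGroup.liftMonoidHomEquiv _)
    _ = _ := card_monoidHom_units_of_isSepClosed _ ℂ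

/-- Let `q : G' → G` be a group epimorphism with finite kernel `Γ`. The number of
one-dimensional representations `ρ : Γ → ℂ*` whose stabilizer `G_ρ` equals all of `G`
is the order of the quotient `Γ/[Γ, G']`, where `[Γ, G']` is the subgroup generated by
commutators of elements of `Γ` with elements of `G'`. -/
theorem card_stable_characters {G' G : Type} [Group G'] [Group G]
    (q : G' →* G) (hq : Function.Surjective q) [Finite q.ker] :
    Nat.card {ρ : q.ker →* ℂˣ // ∀ (a : G') (h : q.ker), ρ (conjKer q a h) = ρ h} =
      Nat.card (q.ker ⧸ (⁅q.ker, (⊤ : Subgroup G')⁆.subgroupOf q.ker)) :=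
  card_stable_characters_general q
end

section
/- Let G' = S₃ be the symmetric group on 3 letters, q : S₃ → ℤ/2ℤ the sign homomorphism (so Γ = Ker q ≅ ℤ/3ℤ), and let π be the group with m ≥ 1 generators x₁,…,x_m and defining relations x₁² = x₂² = ⋯ = x_m². Then the number of homomorphisms π → Γ equals 3, while the homomorphism g : π → ℤ/2ℤ sending each x_i to 1 (mod 2) admits at least 3^m lifts to S₃. -/
/-- The relators `x_i² (x_j²)⁻¹` presenting the group with generators `x₁, …, x_m`
and relations `x₁² = x₂² = ⋯ = x_m²`. -/
def sqRels (m : ℕ) : Set (FreeGroup (Fin m)) :=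
  {r | ∃ i j : Fin m, r = (FreeGroup.of i) ^ 2 * ((FreeGroup.of j) ^ 2)⁻¹}

/-!
A homomorphism out of `⟨x₁, …, x_m | x₁² = ⋯ = x_m²⟩` is the same as a family of `m`
elements with a common square. In `Γ = A₃ ≅ ℤ/3ℤ` squaring is injective, so such a family
is constant and there are `|Γ| = 3` of them. Lifting `g` to `S₃` only asks for odd
permutations `g' xᵢ`; all `3` transpositions square to `1`, so they may be chosen
independently, giving `3^m` lifts.
-/

namespace SqRels

variable {m : ℕ} {G : Type*} [Group G]

theorem of_sq_eq_of_sq (i j : Fin m) :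
    (PresentedGroup.of (rels := sqRels m) i) ^ 2 = PresentedGroup.of j ^ 2 := by
  rw [← mul_inv_eq_one]
  exact (QuotientGroup.eq_one_iff _).2 (Subgroup.subset_normalClosure ⟨i, j, rfl⟩)

noncomputable def homEquiv :
    (PresentedGroup (sqRels m) →* G) ≃ {f : Fin m → G // ∀ i j, f i ^ 2 = f j ^ 2} where
  toFun φ := ⟨fun i => φ (PresentedGroup.of i), fun i j => by
    simp only [← map_pow, of_sq_eq_of_sq i j]⟩
  invFun f := PresentedGroup.toGroup (f := f.1) (by
    rintro r ⟨i, j, rfl⟩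
    simp [f.2 i j])
  left_inv φ := PresentedGroup.ext fun _ => PresentedGroup.toGroup.of _
  right_inv f := Subtype.ext <| funext fun _ => PresentedGroup.toGroup.of _

theorem card_hom_eq_card_of_sq_injective (hm : 1 ≤ m)
    (hsq : Function.Injective fun x : G => x ^ 2) :
    Nat.card (PresentedGroup (sqRels m) →* G) = Nat.card G := by
  let i₀ : Fin m := ⟨0, hm⟩
  exact Nat.card_congr (homEquiv.trans
    { toFun := fun f => f.1 i₀
      invFun := fun x => ⟨Function.const _ x, fun _ _ => rfl⟩
      left_inv := fun f => Subtype.ext <| funext fun i => hsq (f.2 i₀ i)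
      right_inv := fun _ => rfl })

instance [Finite G] : Finite (PresentedGroup (sqRels m) →* G) :=
  Finite.of_equiv _ homEquiv.symm

theorem card_fiber_pow_le_card_lifts {H : Type*} [Group H] [Finite G] (q : G →* H)
    (g : PresentedGroup (sqRels m) →* H) {h : H} (hg : ∀ i, g (PresentedGroup.of i) = h)
    {c : G} (hc : ∀ x, q x = h → x ^ 2 = c) :
    Nat.card {x // q x = h} ^ m ≤
      Nat.card {g' : PresentedGroup (sqRels m) →* G // q.comp g' = g} := by
  let lift (v : Fin m → {x // q x = h}) :
      {g' : PresentedGroup (sqRels m) →* G // q.comp g' = g} :=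
    ⟨homEquiv.symm ⟨fun i => v i, fun i j => by rw [hc _ (v i).2, hc _ (v j).2]⟩,
      PresentedGroup.ext fun i => by
        simp [homEquiv, (v i).2, hg i]⟩
  have lift_injective : Function.Injective lift := fun v w hvw => funext fun i => Subtype.ext <| by
    simpa [lift] using congrArg (fun φ => homEquiv φ.1 |>.1 i) hvw
  simpa [Nat.card_fun] using Nat.card_le_card_of_injective lift lift_injective

end SqRels

theorem card_sign_ker_fin_three : Nat.card (Equiv.Perm.sign (α := Fin 3)).ker = 3 := by
  rw [Nat.card_eq_fintype_card]
  decide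

theorem card_sign_eq_neg_one_fin_three :
    Nat.card {σ : Equiv.Perm (Fin 3) // Equiv.Perm.sign σ = -1} = 3 := by
  rw [Nat.card_eq_fintype_card]
  decide

theorem sq_eq_one_of_sign_eq_neg_one_fin_three :
    ∀ σ : Equiv.Perm (Fin 3), Equiv.Perm.sign σ = -1 → σ ^ 2 = 1 := by
  decide

/-- Let `G' = S₃`, `q = sign : S₃ → {±1} ≅ ℤ/2ℤ`, with kernel `Γ = A₃ ≅ ℤ/3ℤ`, and
let `π` be the group with `m ≥ 1` generators `x₁, …, x_m` and relations
`x₁² = ⋯ = x_m²`. Then `|Hom(π, Γ)| = 3`, while the homomorphism `g : π → ℤ/2ℤ`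
sending each `x_i` to `1 (mod 2)` (i.e. to `-1 ∈ {±1}`) has at least `3^m` lifts
to `S₃`. -/
theorem sq_relations_example (m : ℕ) (hm : 1 ≤ m) :
    Nat.card (PresentedGroup (sqRels m) →* (Equiv.Perm.sign (α := Fin 3)).ker) = 3 ∧
    ∀ g : PresentedGroup (sqRels m) →* ℤˣ,
      (∀ i : Fin m, g (PresentedGroup.of i) = -1) →
      3 ^ m ≤ Nat.card {g' : PresentedGroup (sqRels m) →* Equiv.Perm (Fin 3) //
        (Equiv.Perm.sign).comp g' = g} := by
  refine ⟨?_, fun g hg => ?_⟩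
  · have hsq : Function.Injective fun x : (Equiv.Perm.sign (α := Fin 3)).ker => x ^ 2 :=
      (powCoprime (by rw [card_sign_ker_fin_three]; decide)).injective
    rw [SqRels.card_hom_eq_card_of_sq_injective hm hsq, card_sign_ker_fin_three]
  · have lifts := SqRels.card_fiber_pow_le_card_lifts _ g hg
      sq_eq_one_of_sign_eq_neg_one_fin_three
    rwa [card_sign_eq_neg_one_fin_three] at lifts
end

section
/- Let q : G' → G be a group epimorphism with kernel Γ, let ρ : Γ → GL_n(ℂ) be an irreducible representation whose stabilizer G_ρ equals G, with associated cohomology class ζ_ρ ∈ H²(G; ℂ*) defined by choosing lifts α̃ ∈ q⁻¹(α) and matrices M_α with ρ(α̃⁻¹ h α̃) = M_α⁻¹ ρ(h) M_α, and cocycle ζ_{α,β} determined by ζ_{α,β} M_α M_β = M_{αβ} ρ((αβ)~⁻¹ α̃ β̃). Then n · q*(ζ_ρ) = 0 in H²(G'; ℂ*), i.e., the class ζ_ρ raised to the n-th power pulls back to the trivial class along q. -/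
/-- The kernel element `σ(αβ)⁻¹ σ(α) σ(β)` measuring the failure of a set-theoretic
section `σ` of `q` to be a homomorphism. -/
def sectKerElem {G' G : Type} [Group G'] [Group G] (q : G' →* G)
    (σ : G → G') (hσ : ∀ α : G, q (σ α) = α) (α β : G) : q.ker :=
  ⟨(σ (α * β))⁻¹ * σ α * σ β, by simp [MonoidHom.mem_ker, map_mul, map_inv, hσ]⟩

/-!
Taking determinants in `ζ_{α,β} M_α M_β = M_{αβ} ρ(σ(αβ)⁻¹ σ(α) σ(β))` gives
`ζ_{α,β}ⁿ = det M_{αβ} · χ(σ(αβ)⁻¹ σ(α) σ(β)) / (det M_α · det M_β)` with `χ = det ∘ ρ`.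
The first part is a coboundary already on `G`; the second becomes one on `G'`. Write
`a = σ(q a) · ℓ(a)` with `ℓ(a) ∈ Γ`; then
`ℓ(ab) = σ(αβ)⁻¹ σ(α) σ(β) · σ(β)⁻¹ ℓ(a) σ(β) · ℓ(b)`, and `χ` is invariant under conjugation
by `σ(β)` since that conjugation is realised by `M_β`. Hence `f(a) = (det M_{q a} · χ(ℓ(a)))⁻¹`
trivialises `(q*ζ)ⁿ`.
-/

open Matrix.GeneralLinearGroup (det)

theorem Matrix.GeneralLinearGroup.pow_card_mul_det_mul_det_of_smul_mul_eq {R ι : Type*}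
    [CommRing R] [Fintype ι] [DecidableEq ι] {c : Rˣ} {A B C E : GL ι R}
    (h : (c : R) • ((A : Matrix ι ι R) * B) = (C : Matrix ι ι R) * E) :
    c ^ Fintype.card ι * det A * det B = det C * det E := by
  ext
  simpa [Matrix.det_smul, Matrix.det_mul, mul_assoc] using congrArg Matrix.det h

section KernelOfSection

variable {G' G : Type} [Group G'] [Group G] (q : G' →* G) (σ : G → G')
  (hσ : ∀ α : G, q (σ α) = α)

def liftKerElem (a : G') : q.ker :=
  ⟨(σ (q a))⁻¹ * a, by simp [MonoidHom.mem_ker, hσ]⟩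

theorem liftKerElem_mul (a b : G') :
    liftKerElem q σ hσ (a * b) =
      sectKerElem q σ hσ (q a) (q b) * conjKer q (σ (q b)) (liftKerElem q σ hσ a) *
        liftKerElem q σ hσ b := by
  ext
  simp only [liftKerElem, sectKerElem, conjKer, Subgroup.coe_mul, map_mul]
  group

variable {R ι : Type*} [CommRing R] [Fintype ι] [DecidableEq ι]
  {ρ : q.ker →* GL ι R} {M : G → GL ι R}

theorem det_conjKer_of_conj_eq
    (hM : ∀ (α : G) (h : q.ker), ρ (conjKer q (σ α) h) = (M α)⁻¹ * ρ h * M α)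
    (α : G) (h : q.ker) :
    det (ρ (conjKer q (σ α) h)) = det (ρ h) := by
  rw [hM, map_mul, map_mul, map_inv, mul_comm, mul_inv_cancel_left]

theorem det_liftKerElem_mul
    (hM : ∀ (α : G) (h : q.ker), ρ (conjKer q (σ α) h) = (M α)⁻¹ * ρ h * M α) (a b : G') :
    det (ρ (liftKerElem q σ hσ (a * b))) =
      det (ρ (sectKerElem q σ hσ (q a) (q b))) * det (ρ (liftKerElem q σ hσ a)) *
        det (ρ (liftKerElem q σ hσ b)) := by
  rw [liftKerElem_mul, map_mul, map_mul, map_mul, map_mul,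
    det_conjKer_of_conj_eq q σ hM]

end KernelOfSection

theorem n_mul_pullback_zeta_eq_zero_general {G' G : Type} [Group G'] [Group G] (n : ℕ)
    (q : G' →* G)
    (ρ : q.ker →* GL (Fin n) ℂ)
    (σ : G → G') (hσ : ∀ α : G, q (σ α) = α)
    (M : G → GL (Fin n) ℂ)
    (hM : ∀ (α : G) (h : q.ker), ρ (conjKer q (σ α) h) = (M α)⁻¹ * ρ h * M α)
    (ζ : G → G → ℂˣ)
    (hζ : ∀ α β : G,
      (ζ α β : ℂ) • ((M α : Matrix (Fin n) (Fin n) ℂ) * (M β : Matrix (Fin n) (Fin n) ℂ))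
        = (M (α * β) : Matrix (Fin n) (Fin n) ℂ)
            * (ρ (sectKerElem q σ hσ α β) : Matrix (Fin n) (Fin n) ℂ)) :
    ∃ f : G' → ℂˣ, ∀ a b : G',
      (ζ (q a) (q b)) ^ n = f a * f b * (f (a * b))⁻¹ := by
  refine ⟨fun a => (det (M (q a)) * det (ρ (liftKerElem q σ hσ a)))⁻¹, fun a b => ?_⟩
  have hdet :=
    Matrix.GeneralLinearGroup.pow_card_mul_det_mul_det_of_smul_mul_eq (hζ (q a) (q b))
  rw [Fintype.card_fin] at hdet
  beta_reduce
  rw [map_mul, det_liftKerElem_mul q σ hσ hM, eq_mul_inv_of_mul_eq hdet.symm]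
  apply Additive.ofMul.injective
  simp only [ofMul_mul, ofMul_inv]
  abel

/-- Let `q : G' → G` be an epimorphism with kernel `Γ`, and `ρ : Γ → GL_n(ℂ)` an
irreducible representation whose stabilizer is all of `G`: for chosen lifts
`σ(α) ∈ q⁻¹(α)` there are matrices `M_α` with `ρ(σ(α)⁻¹ h σ(α)) = M_α⁻¹ ρ(h) M_α`,
and the 2-cocycle `ζ` of the class `ζ_ρ ∈ H²(G;ℂ*)` is determined by
`ζ_{α,β} M_α M_β = M_{αβ} ρ(σ(αβ)⁻¹ σ(α) σ(β))`. Then `n · q*(ζ_ρ) = 0` in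
`H²(G';ℂ*)`: the `n`-th power of the pullback of `ζ` along `q` is a coboundary. -/
theorem n_mul_pullback_zeta_eq_zero {G' G : Type} [Group G'] [Group G] (n : ℕ)
    (q : G' →* G) (hq : Function.Surjective q)
    (ρ : q.ker →* GL (Fin n) ℂ)
    (hirr : ∀ p : Submodule ℂ (Fin n → ℂ),
      (∀ h : q.ker, ∀ x ∈ p, (ρ h : Matrix (Fin n) (Fin n) ℂ).mulVec x ∈ p) →
      p = ⊥ ∨ p = ⊤)
    (σ : G → G') (hσ : ∀ α : G, q (σ α) = α)
    (M : G → GL (Fin n) ℂ)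
    (hM : ∀ (α : G) (h : q.ker), ρ (conjKer q (σ α) h) = (M α)⁻¹ * ρ h * M α)
    (ζ : G → G → ℂˣ)
    (hζ : ∀ α β : G,
      (ζ α β : ℂ) • ((M α : Matrix (Fin n) (Fin n) ℂ) * (M β : Matrix (Fin n) (Fin n) ℂ))
        = (M (α * β) : Matrix (Fin n) (Fin n) ℂ)
            * (ρ (sectKerElem q σ hσ α β) : Matrix (Fin n) (Fin n) ℂ)) :
    ∃ f : G' → ℂˣ, ∀ a b : G',
      (ζ (q a) (q b)) ^ n = f a * f b * (f (a * b))⁻¹ :=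
  n_mul_pullback_zeta_eq_zero_general n q ρ σ hσ M hM ζ hζ
end
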